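/- arXiv:1101.1350 — 3 statements merged into one kernel-verified Lean document; each statement's English description precedes it below -/
import Mathlib

section
/- Let m be a positive integer and let ẽ be a random vector in ℝ^m whose m components are independent centered Gaussian random variables each with variance 1/2. Then for every fixed vector v ∈ ℝ^m and every real c > 0 with |v|² > c, Pr(|v|² − 2⟨v, ẽ⟩ < c) ≤ exp(−|v|²/8)·exp(c/4), where ⟨·,·⟩ is the standard inner product and |·| the Euclidean norm on ℝ^m. -/
open MeasureTheory ProbabilityTheory Real

lemma aux_integrable_exp_sub_sq (a : ℝ) :
    Integrable (fun x : ℝ => Real.exp (a * x - x ^ 2)) := by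
  have h : (fun x : ℝ => Real.exp (a * x - x ^ 2))
      = fun x : ℝ => Real.exp (a ^ 2 / 4) * Real.exp (-1 * (x - a / 2) ^ 2) := by
    funext x
    rw [← Real.exp_add]
    ring_nf
  rw [h]
  exact ((integrable_exp_neg_mul_sq one_pos).comp_sub_right (a / 2)).const_mul _

lemma aux_integral_exp_sub_sq (a : ℝ) :
    (∫ x : ℝ, Real.exp (a * x - x ^ 2)) = Real.sqrt π * Real.exp (a ^ 2 / 4) := by
  have h : (fun x : ℝ => Real.exp (a * x - x ^ 2))
      = fun x : ℝ => Real.exp (a ^ 2 / 4) * Real.exp (-1 * (x - a / 2) ^ 2) := by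
    funext x
    rw [← Real.exp_add]
    ring_nf
  rw [h, integral_const_mul _ _,
    integral_sub_right_eq_self (fun y : ℝ => Real.exp (-1 * y ^ 2)) (a / 2),
    integral_gaussian]
  rw [div_one]
  ring

lemma gaussianPDFReal_half (x : ℝ) :
    gaussianPDFReal 0 (1/2) x = (Real.sqrt π)⁻¹ * Real.exp (-(x ^ 2)) := by
  rw [gaussianPDFReal]
  norm_num
  field_simp

lemma aux_gaussian_withDensity :
    gaussianReal 0 (1/2)
      = volume.withDensity fun x => ((gaussianPDFReal 0 (1/2) x).toNNReal : ENNReal) := by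
  rw [gaussianReal_of_var_ne_zero 0 (by norm_num : (1/2 : NNReal) ≠ 0)]
  rfl

lemma aux_meas_pdf : Measurable fun x => (gaussianPDFReal 0 (1/2) x).toNNReal :=
  (measurable_gaussianPDFReal 0 (1/2)).real_toNNReal

lemma aux_integrable_exp_gaussian (a : ℝ) :
    Integrable (fun x : ℝ => Real.exp (a * x)) (gaussianReal 0 (1/2)) := by
  rw [aux_gaussian_withDensity, integrable_withDensity_iff_integrable_smul aux_meas_pdf]
  have h : (fun x : ℝ => (gaussianPDFReal 0 (1/2) x).toNNReal • Real.exp (a * x))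
      = fun x : ℝ => (Real.sqrt π)⁻¹ * Real.exp (a * x - x ^ 2) := by
    funext x
    rw [NNReal.smul_def, Real.coe_toNNReal _ (gaussianPDFReal_nonneg _ _ _),
      gaussianPDFReal_half, smul_eq_mul, mul_assoc, ← Real.exp_add]
    ring_nf
  rw [h]
  exact (aux_integrable_exp_sub_sq a).const_mul _

lemma aux_mgf_gaussian (a : ℝ) :
    (∫ x : ℝ, Real.exp (a * x) ∂(gaussianReal 0 (1/2))) = Real.exp (a ^ 2 / 4) := by
  rw [aux_gaussian_withDensity, integral_withDensity_eq_integral_smul aux_meas_pdf]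
  have h : (fun x : ℝ => (gaussianPDFReal 0 (1/2) x).toNNReal • Real.exp (a * x))
      = fun x : ℝ => (Real.sqrt π)⁻¹ * Real.exp (a * x - x ^ 2) := by
    funext x
    rw [NNReal.smul_def, Real.coe_toNNReal _ (gaussianPDFReal_nonneg _ _ _),
      gaussianPDFReal_half, smul_eq_mul, mul_assoc, ← Real.exp_add]
    ring_nf
  rw [h, integral_const_mul _ _, aux_integral_exp_sub_sq, ← mul_assoc,
    inv_mul_cancel₀ (by positivity : Real.sqrt π ≠ 0), one_mul]

/-- If `ẽ ∈ ℝ^m` has i.i.d. centered Gaussian components of variance `1/2`,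
then for every fixed `v ∈ ℝ^m` and every `c > 0` with `|v|² > c`,
`Pr(|v|² − 2⟨v, ẽ⟩ < c) ≤ exp(−|v|²/8)·exp(c/4)`. -/
theorem gaussian_shifted_halfspace_tail_bound
    (m : ℕ) (hm : 0 < m) (v : Fin m → ℝ) (c : ℝ) (hc : 0 < c)
    (hvc : (∑ i, (v i) ^ 2) > c) :
    (Measure.pi fun _ : Fin m => gaussianReal 0 (1/2))
        {e : Fin m → ℝ | (∑ i, (v i) ^ 2) - 2 * (∑ i, v i * e i) < c} ≤
      ENNReal.ofReal (Real.exp (-(∑ i, (v i) ^ 2) / 8) * Real.exp (c / 4)) := by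
  classical
  set s : ℝ := ∑ i, (v i) ^ 2 with hs
  set X : (Fin m → ℝ) → ℝ := fun e => ∑ i, v i * e i with hX
  set μπ : Measure (Fin m → ℝ) := Measure.pi fun _ : Fin m => gaussianReal 0 (1/2) with hμπ
  letI : MeasureSpace ℝ := ⟨gaussianReal 0 (1/2)⟩
  letI : SigmaFinite (volume : Measure ℝ) :=
    inferInstanceAs (SigmaFinite (gaussianReal 0 (1/2)))
  have hvol : (volume : Measure (Fin m → ℝ)) = μπ := rfl
  have heq : ∀ e : Fin m → ℝ,
      Real.exp ((1/2) * X e) = ∏ i, Real.exp (v i / 2 * e i) := by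
    intro e
    rw [← Real.exp_sum, hX, Finset.mul_sum]
    congr 1
    exact Finset.sum_congr rfl fun i _ => by ring
  have h_int : Integrable (fun e => Real.exp ((1/2) * X e)) μπ := by
    have := Integrable.fintype_prod (f := fun (i : Fin m) (x : ℝ) => Real.exp (v i / 2 * x))
      (fun i => aux_integrable_exp_gaussian (v i / 2))
    rw [← hμπ] at this
    exact this.congr (Filter.Eventually.of_forall fun e => (heq e).symm)
  have h_mgf : mgf X μπ (1/2) = Real.exp (s / 16) := by
    rw [mgf]
    calc (∫ e, Real.exp ((1/2) * X e) ∂μπ)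
        = ∫ e : Fin m → ℝ, ∏ i, Real.exp (v i / 2 * e i) := by
          rw [hvol]; exact integral_congr_ae (Filter.Eventually.of_forall heq)
      _ = ∏ i, ∫ x : ℝ, Real.exp (v i / 2 * x) := by
          exact integral_fintype_prod_eq_prod fun i x => Real.exp (v i / 2 * x)
      _ = ∏ i, Real.exp ((v i / 2) ^ 2 / 4) := by
          exact Finset.prod_congr rfl fun i _ => aux_mgf_gaussian (v i / 2)
      _ = Real.exp (s / 16) := by
          rw [← Real.exp_sum, hs, Finset.sum_div]
          congr 1
          exact Finset.sum_congr rfl fun i _ => by ring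
  have hsub : {e : Fin m → ℝ | s - 2 * X e < c} ⊆ {e : Fin m → ℝ | (s - c) / 2 ≤ X e} := by
    intro e he
    simp only [Set.mem_setOf_eq] at he ⊢
    linarith
  have hchern := measure_ge_le_exp_mul_mgf (μ := μπ) (X := X) ((s - c) / 2)
    (by norm_num : (0:ℝ) ≤ 1/2) h_int
  rw [h_mgf] at hchern
  have hbound : Real.exp (-(1/2) * ((s - c) / 2)) * Real.exp (s / 16)
      ≤ Real.exp (-s / 8) * Real.exp (c / 4) := by
    rw [← Real.exp_add, ← Real.exp_add]
    apply Real.exp_le_exp.mpr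
    nlinarith [hc.le, hvc.le]
  calc μπ {e : Fin m → ℝ | s - 2 * X e < c}
      ≤ μπ {e : Fin m → ℝ | (s - c) / 2 ≤ X e} := measure_mono hsub
    _ = ENNReal.ofReal (μπ {e : Fin m → ℝ | (s - c) / 2 ≤ X e}).toReal :=
        (ENNReal.ofReal_toReal (measure_ne_top _ _)).symm
    _ ≤ ENNReal.ofReal (Real.exp (-s / 8) * Real.exp (c / 4)) :=
        ENNReal.ofReal_le_ofReal (hchern.trans hbound)
end

section
/- Let Λ ⊂ ℝ^m be a full-rank lattice with covolume V_c, and let R ⊂ ℝ^m be a bounded measurable region of finite positive Lebesgue volume V(R). Then there exists a translation vector u₀ ∈ ℝ^m such that the number of points of the translated lattice Λ + u₀ lying in R satisfies |{Λ + u₀} ∩ R| ≥ V(R)/V_c. -/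
open MeasureTheory Submodule Set Matrix Pointwise ENNReal NNReal

/-- For a full-rank lattice `Λ = A·ℤ^m` with covolume `|det A|` and a bounded
measurable region `R ⊂ ℝ^m` of finite positive Lebesgue volume, there is a translate
`Λ + u₀` containing at least `V(R)/|det A|` points of `R`. -/
theorem exists_lattice_translate_many_points
    (m : ℕ) (hm : 0 < m) (A : Matrix (Fin m) (Fin m) ℝ) (hA : IsUnit A.det)
    (R : Set (Fin m → ℝ)) (hRmeas : MeasurableSet R) (hRbdd : Bornology.IsBounded R)
    (hRpos : 0 < volume R) :
    ∃ u₀ : Fin m → ℝ,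
      (volume R).toReal / |A.det| ≤
        ({x ∈ R | ∃ z : Fin m → ℤ, x = A.mulVec (fun i => (z i : ℝ)) + u₀} :
          Set (Fin m → ℝ)).ncard := by
  by_contra hcon
  push_neg at hcon
  -- Setup: the lattice basis
  haveI := A.invertibleOfIsUnitDet hA
  let e := A.toLinearEquiv' inferInstance
  let b : Module.Basis (Fin m) ℝ (Fin m → ℝ) := (Pi.basisFun ℝ (Fin m)).map e
  set L := span ℤ (Set.range b) with hLdef
  have hbi : ∀ i, b i = A.mulVec (Pi.single i 1) := by
    intro i
    simp only [b, Module.Basis.map_apply, Pi.basisFun_apply]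
    rfl
  have h_eq : ∀ z : Fin m → ℤ, A.mulVec (fun i => (z i : ℝ)) = ∑ i, z i • b i := by
    intro z
    have h1 : (fun i => (z i : ℝ)) = ∑ i, (z i : ℝ) • (Pi.single i (1:ℝ) : Fin m → ℝ) := by
      ext j
      rw [Finset.sum_apply]
      simp [Pi.single_apply]
    calc A.mulVec (fun i => (z i : ℝ))
        = A.mulVecLin (∑ i, (z i : ℝ) • (Pi.single i (1:ℝ) : Fin m → ℝ)) := by rw [← h1]; rfl
      _ = ∑ i, (z i : ℝ) • A.mulVec (Pi.single i 1) := by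
          rw [map_sum]; simp [Matrix.mulVecLin]
      _ = ∑ i, z i • b i := by
          refine Finset.sum_congr rfl fun i _ => ?_
          rw [hbi i, Int.cast_smul_eq_zsmul]
  have hmem : ∀ v : Fin m → ℝ, v ∈ L ↔
      ∃ z : Fin m → ℤ, v = A.mulVec (fun i => (z i : ℝ)) := by
    intro v
    rw [hLdef, mem_span_range_iff_exists_fun]
    constructor
    · rintro ⟨z, hz⟩; exact ⟨z, by rw [h_eq, hz]⟩
    · rintro ⟨z, hz⟩; exact ⟨z, by rw [← h_eq, hz]⟩
  -- Fundamental domain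
  set F := ZSpan.fundamentalDomain b with hFdef
  have hFmeas : MeasurableSet F := ZSpan.fundamentalDomain_measurableSet b
  have hFvol : volume F = ENNReal.ofReal |A.det| := by
    rw [hFdef, ZSpan.volume_fundamentalDomain]
    congr 1
    have : (Matrix.of (⇑b) : Matrix (Fin m) (Fin m) ℝ) = A.transpose := by
      ext i j
      simp [hbi, Matrix.mulVec_single, Matrix.transpose_apply]
    rw [this, Matrix.det_transpose]
  haveI : MeasurableVAdd L (Fin m → ℝ) := by
    constructor
    · intro c
      exact (measurable_subtype_coe).add_const c
  haveI : VAddInvariantMeasure L (Fin m → ℝ) volume := by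
    constructor
    intro c s hs
    exact measure_preimage_add volume (c : Fin m → ℝ) s
  have hFD : IsAddFundamentalDomain L F volume := ZSpan.isAddFundamentalDomain b volume
  -- numeric constants
  set c : ℝ := (volume R).toReal / |A.det| with hcdef
  have hdet0 : A.det ≠ 0 := by
    intro h
    rw [h] at hA
    exact (by simpa using hA : IsUnit (0:ℝ)).ne_zero rfl
  have hdetpos : 0 < |A.det| := abs_pos.2 hdet0
  have hRfin : volume R ≠ ⊤ := hRbdd.measure_lt_top.ne
  have hcpos : 0 < c := div_pos (ENNReal.toReal_pos hRpos.ne' hRfin) hdetpos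
  have hceil : 1 ≤ ⌈c⌉₊ := Nat.one_le_iff_ne_zero.2 (Nat.ceil_pos.2 hcpos).ne'
  set n : ℕ := ⌈c⌉₊ - 1 with hndef
  have hn_lt : (n : ℝ) < c := by
    have h1 : (⌈c⌉₊ : ℝ) < c + 1 := Nat.ceil_lt_add_one hcpos.le
    have h2 : (n : ℝ) = (⌈c⌉₊ : ℝ) - 1 := by
      rw [hndef, Nat.cast_sub hceil, Nat.cast_one]
    linarith
  -- finiteness of the sets of lattice points in translates
  have hLclosed : IsClosed (L : Set (Fin m → ℝ)) :=
    AddSubgroup.isClosed_of_discrete (H := L.toAddSubgroup)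
  have hbase : ∀ u : Fin m → ℝ,
      (((-u) +ᵥ R) ∩ (L : Set (Fin m → ℝ))).Finite := by
    intro u
    haveI : DiscreteTopology (↥(L : Set (Fin m → ℝ))) := inferInstanceAs (DiscreteTopology L)
    refine Metric.finite_isBounded_inter_isClosed DiscreteTopology.isDiscrete ?_ hLclosed
    rw [Metric.isBounded_iff] at hRbdd ⊢
    obtain ⟨C, hC⟩ := hRbdd
    refine ⟨C, ?_⟩
    rintro x ⟨a, ha, rfl⟩ y ⟨d, hd, rfl⟩
    simpa [vadd_eq_add] using hC ha hd
  have hSfin : ∀ u : Fin m → ℝ,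
      ({x ∈ R | ∃ z : Fin m → ℤ, x = A.mulVec (fun i => (z i : ℝ)) + u}).Finite := by
    intro u
    have himg : {x ∈ R | ∃ z : Fin m → ℤ, x = A.mulVec (fun i => (z i : ℝ)) + u}
        = (fun y => y + u) '' (((-u) +ᵥ R) ∩ (L : Set (Fin m → ℝ))) := by
      ext x
      constructor
      · rintro ⟨hxR, z, rfl⟩
        refine ⟨A.mulVec (fun i => (z i : ℝ)), ⟨⟨A.mulVec (fun i => (z i : ℝ)) + u, hxR, ?_⟩, ?_⟩, rfl⟩
        · show -u + (A.mulVec (fun i => (z i : ℝ)) + u) = _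
          abel
        · exact (hmem _).2 ⟨z, rfl⟩
      · rintro ⟨y, ⟨⟨r, hr, rfl⟩, hyL⟩, rfl⟩
        obtain ⟨z, hz⟩ := (hmem _).1 hyL
        constructor
        · show (-u +ᵥ r) + u ∈ R
          have : (-u +ᵥ r) + u = r := by
            show -u + r + u = r
            abel
          rwa [this]
        · exact ⟨z, by rw [← hz]⟩
    rw [himg]
    exact ((hbase u).image _)
  -- cardinality bound from the contradiction hypothesis
  have hcard_le : ∀ u : Fin m → ℝ,
      ({x ∈ R | ∃ z : Fin m → ℤ, x = A.mulVec (fun i => (z i : ℝ)) + u}).ncard ≤ n := by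
    intro u
    have h1 := hcon u
    have h2 : (({x ∈ R | ∃ z : Fin m → ℤ, x = A.mulVec (fun i => (z i : ℝ)) + u}).ncard : ℝ)
        < (⌈c⌉₊ : ℝ) := lt_of_lt_of_le h1 (Nat.le_ceil c)
    have h3 : ({x ∈ R | ∃ z : Fin m → ℤ, x = A.mulVec (fun i => (z i : ℝ)) + u}).ncard < ⌈c⌉₊ :=
      by exact_mod_cast h2
    exact Nat.le_sub_one_of_lt h3
  -- the measurable pieces
  have hmeasg : ∀ g : L, MeasurableSet ((g +ᵥ R) ∩ F) := fun g =>
    (hRmeas.const_vadd g).inter hFmeas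
  -- pointwise bound on the multiplicity function
  have hpoint : ∀ x : Fin m → ℝ,
      (∑' g : L, ((g +ᵥ R) ∩ F).indicator (fun _ => (1:ℝ≥0∞)) x)
        ≤ F.indicator (fun _ => (n : ℝ≥0∞)) x := by
    intro x
    by_cases hx : x ∈ F
    · rw [Set.indicator_of_mem hx]
      set T : Set L := {g : L | x ∈ g +ᵥ R} with hTdef
      have hvadd_mem : ∀ g : L, (g +ᵥ R : Set (Fin m → ℝ)) = ((g : Fin m → ℝ) +ᵥ R) := fun g => rfl
      -- inject T into the point set at x
      have hmaps : ∀ g ∈ T, x - (g : Fin m → ℝ) ∈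
          {y ∈ R | ∃ z : Fin m → ℤ, y = A.mulVec (fun i => (z i : ℝ)) + x} := by
        rintro g hg
        obtain ⟨r, hr, hgr⟩ := hg
        obtain ⟨z, hz⟩ := (hmem _).1 g.2
        have hxr : x - (g : Fin m → ℝ) = r := by
          rw [← hgr]
          show (g : Fin m → ℝ) + r - g = r
          abel
        refine ⟨by rwa [hxr], -z, ?_⟩
        have : A.mulVec (fun i => ((-z) i : ℝ)) = - A.mulVec (fun i => (z i : ℝ)) := by
          have hneg : (fun i => ((-z) i : ℝ)) = -(fun i => (z i : ℝ)) := by ext i; simp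
          rw [hneg, Matrix.mulVec_neg]
        rw [this, ← hz]
        abel
      have hinj : Set.InjOn (fun g : L => x - (g : Fin m → ℝ)) T := by
        intro g1 _ g2 _ h
        exact Subtype.coe_injective (sub_right_injective h)
      have hTcard : T.ncard ≤ n :=
        le_trans (Set.ncard_le_ncard_of_injOn _ hmaps hinj (hSfin x)) (hcard_le x)
      have hTfin : T.Finite := by
        refine Set.Finite.of_finite_image ?_ hinj
        exact (hSfin x).subset (Set.image_subset_iff.2 hmaps)
      have hterm : ∀ g : L, ((g +ᵥ R) ∩ F).indicator (fun _ => (1:ℝ≥0∞)) x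
          = T.indicator (fun _ => (1:ℝ≥0∞)) g := by
        intro g
        by_cases hg : g ∈ T
        · rw [Set.indicator_of_mem (Set.mem_inter (show x ∈ g +ᵥ R from hg) hx),
              Set.indicator_of_mem hg]
        · rw [Set.indicator_of_notMem (fun h => hg h.1), Set.indicator_of_notMem hg]
      rw [tsum_congr hterm]
      rw [tsum_eq_sum (s := hTfin.toFinset)
        (fun g hg => Set.indicator_of_notMem (fun h => hg (hTfin.mem_toFinset.2 h)) _)]
      have : ∑ g ∈ hTfin.toFinset, T.indicator (fun _ => (1:ℝ≥0∞)) g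
          = (hTfin.toFinset.card : ℝ≥0∞) := by
        rw [Finset.sum_congr rfl (fun g hg => Set.indicator_of_mem (hTfin.mem_toFinset.1 hg) _)]
        simp
      rw [this]
      have hcard_eq : hTfin.toFinset.card = T.ncard := (Set.ncard_eq_toFinset_card T hTfin).symm
      exact_mod_cast (hcard_eq ▸ hTcard)
    · rw [Set.indicator_of_notMem hx]
      have : ∀ g : L, ((g +ᵥ R) ∩ F).indicator (fun _ => (1:ℝ≥0∞)) x = 0 := fun g =>
        Set.indicator_of_notMem (fun h => hx h.2) _
      rw [tsum_congr this]
      simp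
  -- main estimate
  have key : volume R ≤ (n : ℝ≥0∞) * volume F := by
    calc volume R = ∑' g : L, volume ((g +ᵥ R) ∩ F) := hFD.measure_eq_tsum R
      _ = ∑' g : L, ∫⁻ x, ((g +ᵥ R) ∩ F).indicator (fun _ => (1:ℝ≥0∞)) x := by
          refine tsum_congr fun g => ?_
          rw [lintegral_indicator_const (hmeasg g), one_mul]
      _ = ∫⁻ x, ∑' g : L, ((g +ᵥ R) ∩ F).indicator (fun _ => (1:ℝ≥0∞)) x :=
          (lintegral_tsum fun g => (measurable_const.indicator (hmeasg g)).aemeasurable).symm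
      _ ≤ ∫⁻ x, F.indicator (fun _ => (n : ℝ≥0∞)) x := lintegral_mono hpoint
      _ = (n : ℝ≥0∞) * volume F := lintegral_indicator_const hFmeas _
  -- derive the contradiction
  rw [hFvol] at key
  have hkey' : volume R ≤ ENNReal.ofReal ((n : ℝ) * |A.det|) := by
    rwa [ENNReal.ofReal_mul (by positivity), ENNReal.ofReal_natCast]
  have h1 : (volume R).toReal ≤ (n : ℝ) * |A.det| :=
    ENNReal.toReal_le_of_le_ofReal (by positivity) hkey'
  have h2 : c * |A.det| = (volume R).toReal := div_mul_cancel₀ _ hdetpos.ne'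
  nlinarith [mul_lt_mul_of_pos_right hn_lt hdetpos]
end

section
/- Let M ≤ N be positive integers, let ζ₁ ≥ ζ₂ ≥ … ≥ ζ_M > 0 be reals, and let k be an integer with 0 ≤ k ≤ M. Set r(k) = ∑_{i=M−k+1}^{M} ζ_i (with r(0) = 0). Then the infimum of ∑_{i=1}^{M} (2i − 1 + N − M)·α_i over all α ∈ ℝ^M satisfying α₁ ≥ α₂ ≥ … ≥ α_M ≥ 0 and ∑_{i=1}^{M} ζ_i·(1 − α_i)⁺ ≤ r(k) equals (M − k)(N − k), and it is attained at α_i = 1 for 1 ≤ i ≤ M − k and α_i = 0 for M − k + 1 ≤ i ≤ M. -/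
open Finset

lemma sum_range_lin (c : ℝ) (m : ℕ) :
    ∑ i ∈ Finset.range m, (2 * (i : ℝ) + c) = m * ((m : ℝ) - 1) + m * c := by
  induction m with
  | zero => simp
  | succ n ih =>
    rw [Finset.sum_range_succ, ih]
    push_cast
    ring

lemma weight_sum (M N k : ℕ) (hMN : M ≤ N) (hk : k ≤ M) :
    ∑ i ∈ univ.filter (fun i : Fin M => i.val < M - k),
      (2 * (i.val : ℝ) + 1 + (N : ℝ) - (M : ℝ)) = ((M : ℝ) - k) * ((N : ℝ) - k) := by
  rw [Finset.sum_filter]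
  rw [Fin.sum_univ_eq_sum_range
    (fun j => if j < M - k then (2 * (j : ℝ) + 1 + (N : ℝ) - (M : ℝ)) else 0) M]
  rw [← Finset.sum_subset (Finset.range_subset_range.2 (Nat.sub_le M k))
    (fun x _ hx => if_neg (by simpa using hx))]
  rw [Finset.sum_congr rfl (fun x hx => if_pos (Finset.mem_range.1 hx))]
  have h2 : ∑ i ∈ Finset.range (M - k), (2 * (i : ℝ) + 1 + (N : ℝ) - (M : ℝ))
      = ∑ i ∈ Finset.range (M - k), (2 * (i : ℝ) + (1 + (N : ℝ) - (M : ℝ))) := by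
    apply Finset.sum_congr rfl
    intro x _
    ring
  rw [h2, sum_range_lin]
  have hc : ((M - k : ℕ) : ℝ) = (M : ℝ) - k := by
    rw [Nat.cast_sub hk]
  rw [hc]
  ring

/-- For `M ≤ N`, decreasing positive `ζ₁ ≥ … ≥ ζ_M > 0` and `0 ≤ k ≤ M`,
the infimum of `∑ (2i − 1 + N − M)·αᵢ` over decreasing nonnegative `α` with
`∑ ζᵢ(1 − αᵢ)⁺ ≤ r(k) = ∑_{i=M−k+1}^{M} ζᵢ` equals `(M − k)(N − k)`, attained at
`αᵢ = 1` for `i ≤ M − k` and `αᵢ = 0` otherwise.  (Indices are 0-based: the weight of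
`i : Fin M` is `2(i+1) − 1 + N − M = 2i + 1 + N − M`.) -/
theorem outage_exponent_optimization
    (M N k : ℕ) (hM : 0 < M) (hMN : M ≤ N) (hk : k ≤ M)
    (ζ : Fin M → ℝ) (hζpos : ∀ i, 0 < ζ i)
    (hζdec : ∀ i j : Fin M, i ≤ j → ζ j ≤ ζ i) :
    IsLeast
      {s : ℝ | ∃ α : Fin M → ℝ,
        (∀ i, 0 ≤ α i) ∧
        (∀ i j : Fin M, i ≤ j → α j ≤ α i) ∧
        (∑ i, ζ i * max (1 - α i) 0) ≤
          (∑ i ∈ univ.filter (fun i : Fin M => M - k ≤ i.val), ζ i) ∧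
        s = ∑ i : Fin M, (2 * (i.val : ℝ) + 1 + (N : ℝ) - (M : ℝ)) * α i}
      (((M : ℝ) - k) * ((N : ℝ) - k)) ∧
    (∑ i : Fin M, (2 * (i.val : ℝ) + 1 + (N : ℝ) - (M : ℝ)) *
        (if i.val < M - k then (1 : ℝ) else 0)) =
      ((M : ℝ) - k) * ((N : ℝ) - k) := by
  have hNM : (M : ℝ) ≤ (N : ℝ) := Nat.cast_le.2 hMN
  have hwpos : ∀ i : Fin M, (0 : ℝ) < 2 * (i.val : ℝ) + 1 + (N : ℝ) - (M : ℝ) := by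
    intro i
    have : (0 : ℝ) ≤ (i.val : ℝ) := Nat.cast_nonneg _
    linarith
  have hattain : (∑ i : Fin M, (2 * (i.val : ℝ) + 1 + (N : ℝ) - (M : ℝ)) *
        (if i.val < M - k then (1 : ℝ) else 0)) = ((M : ℝ) - k) * ((N : ℝ) - k) := by
    rw [← weight_sum M N k hMN hk, Finset.sum_filter]
    apply Finset.sum_congr rfl
    intro i _
    split_ifs <;> simp
  constructor
  · constructor
    · -- membership
      refine ⟨fun i => if i.val < M - k then (1 : ℝ) else 0, ?_, ?_, ?_, hattain.symm⟩
      · intro i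
        dsimp only
        split_ifs <;> norm_num
      · intro i j hij
        have hij' : i.val ≤ j.val := hij
        dsimp only
        by_cases h : j.val < M - k
        · rw [if_pos h, if_pos (by omega)]
        · rw [if_neg h]
          split_ifs <;> norm_num
      · have : ∀ i : Fin M,
            ζ i * max (1 - if i.val < M - k then (1 : ℝ) else 0) 0
              = if M - k ≤ i.val then ζ i else 0 := by
          intro i
          by_cases h : i.val < M - k
          · rw [if_pos h, if_neg (by omega)]
            norm_num
          · rw [if_neg h, if_pos (by omega)]
            norm_num
        rw [Finset.sum_congr rfl (fun i _ => this i), ← Finset.sum_filter]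
    · -- lower bound
      rintro s ⟨α, h0, hdec, hcon, rfl⟩
      set β : Fin M → ℝ := fun i => max (1 - α i) 0 with hβ
      have hβ0 : ∀ i, 0 ≤ β i := fun i => le_max_right _ _
      have hβ1 : ∀ i, β i ≤ 1 := fun i => max_le (by linarith [h0 i]) zero_le_one
      have hαβ : ∀ i, 1 - β i ≤ α i := by
        intro i
        have := le_max_left (1 - α i) 0
        have : 1 - α i ≤ β i := this
        linarith
      have hβmono : ∀ i j : Fin M, i ≤ j → β i ≤ β j := by
        intro i j hij
        exact max_le_max (by linarith [hdec i j hij]) le_rfl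
      -- key inequality
      have hkey : ∑ i ∈ univ.filter (fun i : Fin M => i.val < M - k),
            (2 * (i.val : ℝ) + 1 + (N : ℝ) - (M : ℝ)) * β i
          ≤ ∑ i ∈ univ.filter (fun i : Fin M => ¬ i.val < M - k),
            (2 * (i.val : ℝ) + 1 + (N : ℝ) - (M : ℝ)) * (1 - β i) := by
        -- constraint rearranged
        have hfe : univ.filter (fun i : Fin M => ¬ i.val < M - k)
            = univ.filter (fun i : Fin M => M - k ≤ i.val) := by
          apply Finset.filter_congr
          intro i _
          simp [not_lt]
        have hsplit := Finset.sum_filter_add_sum_filter_not univ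
          (fun i : Fin M => i.val < M - k) (fun i => ζ i * β i)
        have hsum2 : ∑ i ∈ univ.filter (fun i : Fin M => ¬ i.val < M - k), ζ i * (1 - β i)
            = (∑ i ∈ univ.filter (fun i : Fin M => ¬ i.val < M - k), ζ i)
              - ∑ i ∈ univ.filter (fun i : Fin M => ¬ i.val < M - k), ζ i * β i := by
          rw [← Finset.sum_sub_distrib]
          apply Finset.sum_congr rfl
          intro i _
          ring
        have hconβ : (∑ i, ζ i * β i)
            ≤ ∑ i ∈ univ.filter (fun i : Fin M => M - k ≤ i.val), ζ i := hcon
        rw [← hfe] at hconβ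
        have hcon' : ∑ i ∈ univ.filter (fun i : Fin M => i.val < M - k), ζ i * β i
            ≤ ∑ i ∈ univ.filter (fun i : Fin M => ¬ i.val < M - k), ζ i * (1 - β i) := by
          rw [hsum2]
          linarith [hsplit]
        by_cases hm0 : M - k = 0
        · have h1 : univ.filter (fun i : Fin M => i.val < M - k) = ∅ := by
            apply Finset.filter_false_of_mem
            intro i _
            omega
          rw [h1, Finset.sum_empty]
          apply Finset.sum_nonneg
          intro i _
          exact mul_nonneg (hwpos i).le (by linarith [hβ1 i])
        · have hpM : M - k - 1 < M := by omega
          set p : Fin M := ⟨M - k - 1, hpM⟩ with hp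
          have hζp : 0 < ζ p := hζpos p
          have hcnn : 0 ≤ (2 * (p.val : ℝ) + 1 + (N : ℝ) - (M : ℝ)) / ζ p :=
            div_nonneg (hwpos p).le hζp.le
          calc ∑ i ∈ univ.filter (fun i : Fin M => i.val < M - k),
                (2 * (i.val : ℝ) + 1 + (N : ℝ) - (M : ℝ)) * β i
              ≤ ∑ i ∈ univ.filter (fun i : Fin M => i.val < M - k),
                ((2 * (p.val : ℝ) + 1 + (N : ℝ) - (M : ℝ)) / ζ p) * (ζ i * β i) := by
                apply Finset.sum_le_sum
                intro i hi
                have hiv : i.val < M - k := (Finset.mem_filter.1 hi).2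
                have hip : i ≤ p := by
                  have : i.val ≤ p.val := by
                    simp only [hp]
                    omega
                  exact Fin.le_def.2 this
                have hζip : ζ p ≤ ζ i := hζdec i p hip
                have hwip : (2 * (i.val : ℝ) + 1 + (N : ℝ) - (M : ℝ))
                    ≤ 2 * (p.val : ℝ) + 1 + (N : ℝ) - (M : ℝ) := by
                  have : (i.val : ℝ) ≤ (p.val : ℝ) := Nat.cast_le.2 (Fin.le_def.1 hip)
                  linarith
                have hmain : (2 * (i.val : ℝ) + 1 + (N : ℝ) - (M : ℝ))
                    ≤ ((2 * (p.val : ℝ) + 1 + (N : ℝ) - (M : ℝ)) / ζ p) * ζ i := by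
                  rw [div_mul_eq_mul_div, le_div_iff₀ hζp]
                  nlinarith [hwpos i, hwpos p]
                calc (2 * (i.val : ℝ) + 1 + (N : ℝ) - (M : ℝ)) * β i
                    ≤ (((2 * (p.val : ℝ) + 1 + (N : ℝ) - (M : ℝ)) / ζ p) * ζ i) * β i :=
                      mul_le_mul_of_nonneg_right hmain (hβ0 i)
                  _ = ((2 * (p.val : ℝ) + 1 + (N : ℝ) - (M : ℝ)) / ζ p) * (ζ i * β i) := by
                      ring
            _ = ((2 * (p.val : ℝ) + 1 + (N : ℝ) - (M : ℝ)) / ζ p) *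
                  ∑ i ∈ univ.filter (fun i : Fin M => i.val < M - k), ζ i * β i := by
                rw [Finset.mul_sum]
            _ ≤ ((2 * (p.val : ℝ) + 1 + (N : ℝ) - (M : ℝ)) / ζ p) *
                  ∑ i ∈ univ.filter (fun i : Fin M => ¬ i.val < M - k), ζ i * (1 - β i) :=
                mul_le_mul_of_nonneg_left hcon' hcnn
            _ = ∑ i ∈ univ.filter (fun i : Fin M => ¬ i.val < M - k),
                  ((2 * (p.val : ℝ) + 1 + (N : ℝ) - (M : ℝ)) / ζ p) * (ζ i * (1 - β i)) := by
                rw [Finset.mul_sum]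
            _ ≤ ∑ i ∈ univ.filter (fun i : Fin M => ¬ i.val < M - k),
                  (2 * (i.val : ℝ) + 1 + (N : ℝ) - (M : ℝ)) * (1 - β i) := by
                apply Finset.sum_le_sum
                intro i hi
                have hiv : ¬ i.val < M - k := (Finset.mem_filter.1 hi).2
                have hpi : p ≤ i := by
                  apply Fin.le_def.2
                  simp only [hp]
                  omega
                have hζpi : ζ i ≤ ζ p := hζdec p i hpi
                have hwpi : (2 * (p.val : ℝ) + 1 + (N : ℝ) - (M : ℝ))
                    ≤ 2 * (i.val : ℝ) + 1 + (N : ℝ) - (M : ℝ) := by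
                  have : (p.val : ℝ) ≤ (i.val : ℝ) := Nat.cast_le.2 (Fin.le_def.1 hpi)
                  linarith
                have hmain : ((2 * (p.val : ℝ) + 1 + (N : ℝ) - (M : ℝ)) / ζ p) * ζ i
                    ≤ 2 * (i.val : ℝ) + 1 + (N : ℝ) - (M : ℝ) := by
                  rw [div_mul_eq_mul_div, div_le_iff₀ hζp]
                  nlinarith [hwpos i, hwpos p, (hζpos i).le]
                calc ((2 * (p.val : ℝ) + 1 + (N : ℝ) - (M : ℝ)) / ζ p) * (ζ i * (1 - β i))
                    = (((2 * (p.val : ℝ) + 1 + (N : ℝ) - (M : ℝ)) / ζ p) * ζ i) * (1 - β i) := by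
                      ring
                  _ ≤ (2 * (i.val : ℝ) + 1 + (N : ℝ) - (M : ℝ)) * (1 - β i) :=
                      mul_le_mul_of_nonneg_right hmain (by linarith [hβ1 i])
      -- assemble
      have hstep : ∑ i ∈ univ.filter (fun i : Fin M => i.val < M - k),
            (2 * (i.val : ℝ) + 1 + (N : ℝ) - (M : ℝ))
          ≤ ∑ i : Fin M, (2 * (i.val : ℝ) + 1 + (N : ℝ) - (M : ℝ)) * (1 - β i) := by
        rw [← Finset.sum_filter_add_sum_filter_not univ (fun i : Fin M => i.val < M - k)
          (fun i => (2 * (i.val : ℝ) + 1 + (N : ℝ) - (M : ℝ)) * (1 - β i))]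
        have e : ∑ i ∈ univ.filter (fun i : Fin M => i.val < M - k),
              (2 * (i.val : ℝ) + 1 + (N : ℝ) - (M : ℝ))
            = (∑ i ∈ univ.filter (fun i : Fin M => i.val < M - k),
                (2 * (i.val : ℝ) + 1 + (N : ℝ) - (M : ℝ)) * (1 - β i))
              + ∑ i ∈ univ.filter (fun i : Fin M => i.val < M - k),
                (2 * (i.val : ℝ) + 1 + (N : ℝ) - (M : ℝ)) * β i := by
          rw [← Finset.sum_add_distrib]
          apply Finset.sum_congr rfl
          intro i _
          ring
        rw [e]
        linarith [hkey]
      calc ((M : ℝ) - k) * ((N : ℝ) - k)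
          = ∑ i ∈ univ.filter (fun i : Fin M => i.val < M - k),
              (2 * (i.val : ℝ) + 1 + (N : ℝ) - (M : ℝ)) := (weight_sum M N k hMN hk).symm
        _ ≤ ∑ i : Fin M, (2 * (i.val : ℝ) + 1 + (N : ℝ) - (M : ℝ)) * (1 - β i) := hstep
        _ ≤ ∑ i : Fin M, (2 * (i.val : ℝ) + 1 + (N : ℝ) - (M : ℝ)) * α i := by
            apply Finset.sum_le_sum
            intro i _
            exact mul_le_mul_of_nonneg_left (hαβ i) (hwpos i).le
  · exact hattain
end
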